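/- Let u : ℝ³ → ℝ be a smooth (C^∞) function satisfying the Janet system, i.e. ∂₃∂₃u(x) = x² ∂₁∂₁u(x) and ∂₂∂₂u(x) = 0 for every x = (x¹,x²,x³) ∈ ℝ³. Then ∂₂∂₃∂₃u(x) = ∂₁∂₁u(x) for every x ∈ ℝ³. -/

import Mathlib

/-- Partial derivative of `f : ℝ³ → ℝ` with respect to the `i`-th coordinate,
taken as the derivative along the corresponding coordinate line. -/
noncomputable def pd (i : Fin 3) (f : (Fin 3 → ℝ) → ℝ) : (Fin 3 → ℝ) → ℝ :=
  fun x => deriv (fun t => f (Function.update x i t)) (x i)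

lemma hasDerivAt_update' (x : Fin 3 → ℝ) (i : Fin 3) (t : ℝ) :
    HasDerivAt (fun s : ℝ => Function.update x i s) (Pi.single i 1) t := by
  have h : (fun s : ℝ => Function.update x i s)
      = fun s : ℝ => x + (s - x i) • (Pi.single i 1 : Fin 3 → ℝ) := by
    funext s j
    rcases eq_or_ne j i with rfl | h
    · simp
    · simp [Function.update_of_ne h, Pi.single_apply, h]
  rw [h]
  simpa using (((hasDerivAt_id t).sub_const (x i)).smul_const (Pi.single i 1 : Fin 3 → ℝ)).const_add x

lemma hasDerivAt_pd' (f : (Fin 3 → ℝ) → ℝ) (hf : Differentiable ℝ f) (i : Fin 3)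
    (x : Fin 3 → ℝ) :
    HasDerivAt (fun t => f (Function.update x i t)) (fderiv ℝ f x (Pi.single i 1)) (x i) := by
  have h := (hf (Function.update x i (x i))).hasFDerivAt.comp_hasDerivAt (x i)
      (hasDerivAt_update' x i (x i))
  simp only [Function.update_eq_self] at h
  exact h

lemma pd_eq (f : (Fin 3 → ℝ) → ℝ) (hf : Differentiable ℝ f) (i : Fin 3) (x : Fin 3 → ℝ) :
    pd i f x = fderiv ℝ f x (Pi.single i 1) :=
  (hasDerivAt_pd' f hf i x).deriv

lemma hasDerivAt_pd (f : (Fin 3 → ℝ) → ℝ) (hf : Differentiable ℝ f) (i : Fin 3)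
    (x : Fin 3 → ℝ) :
    HasDerivAt (fun t => f (Function.update x i t)) (pd i f x) (x i) := by
  rw [pd_eq f hf i x]; exact hasDerivAt_pd' f hf i x

lemma pd_contDiff {f : (Fin 3 → ℝ) → ℝ} (hf : ContDiff ℝ (⊤ : ℕ∞) f) (i : Fin 3) :
    ContDiff ℝ (⊤ : ℕ∞) (pd i f) := by
  have h : pd i f = fun x => fderiv ℝ f x (Pi.single i 1) :=
    funext fun x => pd_eq f (hf.differentiable (by simp)) i x
  rw [h]
  exact (hf.fderiv_right (by simp)).clm_apply contDiff_const

lemma pd_comm {f : (Fin 3 → ℝ) → ℝ} (hf : ContDiff ℝ (⊤ : ℕ∞) f) (i j : Fin 3) :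
    pd i (pd j f) = pd j (pd i f) := by
  have hdf : Differentiable ℝ f := hf.differentiable (by simp)
  have hfd : ContDiff ℝ (⊤ : ℕ∞) (fderiv ℝ f) := hf.fderiv_right (by simp)
  funext x
  have key : ∀ v w : Fin 3 → ℝ,
      fderiv ℝ (fun y => fderiv ℝ f y w) x v = fderiv ℝ (fderiv ℝ f) x v w := by
    intro v w
    have h1 : HasFDerivAt (fderiv ℝ f) (fderiv ℝ (fderiv ℝ f) x) x :=
      ((hfd.differentiable (by simp)) x).hasFDerivAt
    have h2 : HasFDerivAt (fun y => fderiv ℝ f y w)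
        ((ContinuousLinearMap.apply ℝ ℝ w).comp (fderiv ℝ (fderiv ℝ f) x)) x :=
      (ContinuousLinearMap.apply ℝ ℝ w).hasFDerivAt.comp x h1
    simp [h2.fderiv]
  have hsymm : ∀ v w : Fin 3 → ℝ,
      fderiv ℝ (fderiv ℝ f) x v w = fderiv ℝ (fderiv ℝ f) x w v := by
    intro v w
    exact second_derivative_symmetric (fun y => (hdf y).hasFDerivAt)
      (((hfd.differentiable (by simp)) x).hasFDerivAt) v w
  have e1 : pd i (pd j f) x = fderiv ℝ (fderiv ℝ f) x (Pi.single i 1) (Pi.single j 1) := by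
    rw [pd_eq (pd j f) ((pd_contDiff hf j).differentiable (by simp)) i x]
    have : pd j f = fun y => fderiv ℝ f y (Pi.single j 1) :=
      funext fun y => pd_eq f hdf j y
    rw [this, key]
  have e2 : pd j (pd i f) x = fderiv ℝ (fderiv ℝ f) x (Pi.single j 1) (Pi.single i 1) := by
    rw [pd_eq (pd i f) ((pd_contDiff hf i).differentiable (by simp)) j x]
    have : pd i f = fun y => fderiv ℝ f y (Pi.single i 1) :=
      funext fun y => pd_eq f hdf i y
    rw [this, key]
  rw [e1, e2, hsymm]

lemma pd_zero (i : Fin 3) : pd i (fun _ => (0:ℝ)) = fun _ => 0 := by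
  funext x; simp [pd]

lemma pd_add (f g : (Fin 3 → ℝ) → ℝ) (hf : Differentiable ℝ f) (hg : Differentiable ℝ g)
    (i : Fin 3) (x : Fin 3 → ℝ) :
    pd i (fun y => f y + g y) x = pd i f x + pd i g x :=
  ((hasDerivAt_pd f hf i x).add (hasDerivAt_pd g hg i x)).deriv

lemma pd_coord_mul (g : (Fin 3 → ℝ) → ℝ) (hg : Differentiable ℝ g) (x : Fin 3 → ℝ) :
    pd 1 (fun y => y 1 * g y) x = g x + x 1 * pd 1 g x := by
  have h : HasDerivAt (fun t : ℝ => (fun y => y 1 * g y) (Function.update x 1 t))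
      (g x + x 1 * pd 1 g x) (x 1) := by
    have h1 : HasDerivAt (fun t : ℝ => t * g (Function.update x 1 t))
        (1 * g (Function.update x 1 (x 1)) + x 1 * pd 1 g x) (x 1) :=
      (hasDerivAt_id (x 1)).mul (hasDerivAt_pd g hg 1 x)
    simpa [Function.update_eq_self] using h1
  exact h.deriv

/-- A smooth solution of the Janet system ∂₃∂₃u = x²∂₁∂₁u, ∂₂∂₂u = 0 satisfies ∂₂∂₃∂₃u = ∂₁∂₁u.  Coordinate `xⁱ` corresponds to index `i - 1 : Fin 3`. -/
theorem janet_u233_eq_u11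
    (u : (Fin 3 → ℝ) → ℝ) (hu : ContDiff ℝ (⊤ : ℕ∞) u)
    (hJ1 : ∀ x : Fin 3 → ℝ, pd 2 (pd 2 u) x = x 1 * pd 0 (pd 0 u) x)
    (hJ2 : ∀ x : Fin 3 → ℝ, pd 1 (pd 1 u) x = 0) :
    ∀ x : Fin 3 → ℝ, pd 1 (pd 2 (pd 2 u)) x = pd 0 (pd 0 u) x := by
  -- notation
  set v : (Fin 3 → ℝ) → ℝ := pd 0 (pd 0 u) with hv
  have hu0 : ContDiff ℝ (⊤ : ℕ∞) (pd 0 u) := pd_contDiff hu 0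
  have hu1 : ContDiff ℝ (⊤ : ℕ∞) (pd 1 u) := pd_contDiff hu 1
  have hu2 : ContDiff ℝ (⊤ : ℕ∞) (pd 2 u) := pd_contDiff hu 2
  have hv' : ContDiff ℝ (⊤ : ℕ∞) v := pd_contDiff hu0 0
  have hv1 : ContDiff ℝ (⊤ : ℕ∞) (pd 1 v) := pd_contDiff hv' 1
  have hZ : pd 1 (pd 1 u) = fun _ => (0:ℝ) := funext hJ2
  -- pd 1 (pd 1 v) = 0
  have h11v : pd 1 (pd 1 v) = fun _ => (0:ℝ) := by
    have s1 : pd 1 v = pd 0 (pd 1 (pd 0 u)) := by rw [hv, pd_comm hu0 1 0]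
    have s2 : pd 1 (pd 0 u) = pd 0 (pd 1 u) := pd_comm hu 1 0
    calc pd 1 (pd 1 v) = pd 1 (pd 0 (pd 0 (pd 1 u))) := by rw [s1, s2]
      _ = pd 0 (pd 1 (pd 0 (pd 1 u))) := pd_comm (pd_contDiff hu1 0) 1 0
      _ = pd 0 (pd 0 (pd 1 (pd 1 u))) := by rw [pd_comm hu1 1 0]
      _ = fun _ => 0 := by rw [hZ, pd_zero, pd_zero]
  -- pd 1 (pd 1 (pd 2 (pd 2 u))) = 0
  have h1122 : pd 1 (pd 1 (pd 2 (pd 2 u))) = fun _ => (0:ℝ) := by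
    have s1 : pd 1 (pd 2 u) = pd 2 (pd 1 u) := pd_comm hu 1 2
    calc pd 1 (pd 1 (pd 2 (pd 2 u)))
        = pd 1 (pd 2 (pd 2 (pd 1 u))) := by rw [pd_comm hu2 1 2, s1]
      _ = pd 2 (pd 1 (pd 2 (pd 1 u))) := by rw [pd_comm (pd_contDiff hu1 2) 1 2]
      _ = pd 2 (pd 2 (pd 1 (pd 1 u))) := by rw [pd_comm hu1 1 2]
      _ = fun _ => 0 := by rw [hZ, pd_zero, pd_zero]
  -- rewrite pd 2 (pd 2 u) via hJ1
  have hmul : pd 2 (pd 2 u) = fun y => y 1 * v y := funext hJ1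
  -- pd 1 (pd 2 (pd 2 u)) = v + x1 * pd 1 v
  have hstep : ∀ x : Fin 3 → ℝ, pd 1 (pd 2 (pd 2 u)) x = v x + x 1 * pd 1 v x := by
    intro x
    rw [hmul]
    exact pd_coord_mul v (hv'.differentiable (by simp)) x
  -- compute pd 1 v = 0
  have hkey : ∀ x : Fin 3 → ℝ, pd 1 v x = 0 := by
    intro x
    have h1 : pd 1 (pd 1 (pd 2 (pd 2 u))) x = 0 := by rw [h1122]
    have h2 : pd 1 (pd 2 (pd 2 u)) = fun y => v y + y 1 * pd 1 v y := funext hstep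
    rw [h2] at h1
    have h3 : pd 1 (fun y => v y + y 1 * pd 1 v y) x
        = pd 1 v x + (pd 1 v x + x 1 * pd 1 (pd 1 v) x) := by
      rw [pd_add v (fun y => y 1 * pd 1 v y) (hv'.differentiable (by simp))
        (((contDiff_apply ℝ ℝ 1).mul hv1).differentiable (by simp)) 1 x,
        pd_coord_mul (pd 1 v) (hv1.differentiable (by simp)) x]
    rw [h3] at h1
    have h4 : pd 1 (pd 1 v) x = 0 := by rw [h11v]
    rw [h4] at h1
    linarith
  intro x
  rw [hstep x, hkey x]
  ring
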